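/- arXiv:2104.14151 — 3 statements merged into one kernel-verified Lean document; each statement's English description precedes it below -/
import Mathlib

section
/- Let d(z) = z√3 / sqrt((2+z)(6-5z)^3) and let s(z) be the unique analytic function near 0 with s(0) = 0 satisfying z·s'(z) = 4·d(z). Then s(z) = (1/2)(-1 + sqrt(2+z)/sqrt(2 - 5z/3)). -/
open Real Filter

/-- The generating function of the limiting root-edge-origin degree distribution of random
planar maps. -/
noncomputable def dGF : ℝ → ℝ := fun z =>
  z * Real.sqrt 3 / Real.sqrt ((2 + z) * (6 - 5 * z) ^ 3)

/-!
Away from `z = 0` the equation forces `s' = 4 d(z) / z`, and since `s'` is continuous this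
persists at `z = 0`. The closed form has this same derivative on `(-2, 6/5)` and vanishes at `0`,
so by the mean value theorem it coincides with `s` near `0`.
-/

open Topology

theorem eventuallyEq_of_hasDerivAt_of_eq {𝕜 G : Type*} [RCLike 𝕜] [NormedAddCommGroup G]
    [NormedSpace 𝕜 G] {f g f' : 𝕜 → G} {a : 𝕜} (hf : ∀ᶠ z in 𝓝 a, HasDerivAt f (f' z) z)
    (hg : ∀ᶠ z in 𝓝 a, HasDerivAt g (f' z) z) (ha : f a = g a) : f =ᶠ[𝓝 a] g := by
  obtain ⟨ε, hε, hball⟩ := Metric.eventually_nhds_iff_ball.mp (hf.and hg)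
  filter_upwards [Metric.ball_mem_nhds a hε] with z hz
  exact Metric.isOpen_ball.eqOn_of_deriv_eq (convex_ball a ε).isPreconnected
    (fun x hx => (hball x hx).1.differentiableAt.differentiableWithinAt)
    (fun x hx => (hball x hx).2.differentiableAt.differentiableWithinAt)
    (fun x hx => (hball x hx).1.deriv.trans (hball x hx).2.deriv.symm)
    (Metric.mem_ball_self hε) ha hz

theorem eventuallyEq_of_mul_eq {𝕜 : Type*} [NontriviallyNormedField 𝕜] {u v : 𝕜 → 𝕜}
    (hu : ContinuousAt u 0) (hv : ContinuousAt v 0) (h : ∀ᶠ z in 𝓝 0, z * u z = z * v z) :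
    u =ᶠ[𝓝 0] v := by
  refine (hu.eventuallyEq_nhds_iff_eventuallyEq_nhdsNE hv).mp ?_
  filter_upwards [eventually_nhdsWithin_of_eventually_nhds h, self_mem_nhdsWithin] with z hz hz0
  exact mul_left_cancel₀ hz0 hz

noncomputable def sGF (z : ℝ) : ℝ :=
  (1 / 2) * (-1 + √(2 + z) / √(2 - 5 * z / 3))

/-- `4 d(z) / z`, continued across `z = 0`. -/
noncomputable def sGFDeriv (z : ℝ) : ℝ :=
  4 * √3 / √((2 + z) * (6 - 5 * z) ^ 3)

theorem mul_sGFDeriv (z : ℝ) : z * sGFDeriv z = 4 * dGF z := by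
  simp only [sGFDeriv, dGF]
  ring

theorem continuousAt_sGFDeriv {z : ℝ} (hz : z ∈ Set.Ioo (-2) (6 / 5)) :
    ContinuousAt sGFDeriv z := by
  obtain ⟨h1, h2⟩ := hz
  have hpos : 0 < (2 + z) * (6 - 5 * z) ^ 3 := mul_pos (by linarith) (pow_pos (by linarith) 3)
  exact continuousAt_const.div (by fun_prop) (sqrt_ne_zero'.mpr hpos)

theorem sqrt_two_add_mul_pow_three_eq {z : ℝ} (hz : z ∈ Set.Ioo (-2) (6 / 5)) :
    √((2 + z) * (6 - 5 * z) ^ 3) = 3 * √3 * √(2 + z) * √(2 - 5 * z / 3) ^ 3 := by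
  obtain ⟨h1, h2⟩ := hz
  have : (6 - 5 * z) ^ 3 = (3 * √3 * √(2 - 5 * z / 3) ^ 3) ^ 2 := by
    rw [mul_pow, mul_pow, ← pow_mul, show 3 * 2 = 2 * 3 by rfl, pow_mul,
      sq_sqrt (show (0 : ℝ) ≤ 2 - 5 * z / 3 by linarith), sq_sqrt (show (0 : ℝ) ≤ 3 by norm_num)]
    ring
  rw [this, sqrt_mul (by linarith), sqrt_sq (by positivity)]
  ring

theorem hasDerivAt_sGF {z : ℝ} (hz : z ∈ Set.Ioo (-2) (6 / 5)) :
    HasDerivAt sGF (sGFDeriv z) z := by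
  obtain ⟨h1, h2⟩ := id hz
  have ha : 0 < 2 + z := by linarith
  have hb : 0 < 2 - 5 * z / 3 := by linarith
  have hnum : HasDerivAt (fun y => √(2 + y)) (1 / (2 * √(2 + z))) z :=
    ((hasDerivAt_id' z).const_add 2).sqrt ha.ne'
  have hden : HasDerivAt (fun y => √(2 - 5 * y / 3)) (-(5 / 3) / (2 * √(2 - 5 * z / 3))) z := by
    convert (((hasDerivAt_id' z).const_mul 5).div_const 3 |>.const_sub 2).sqrt hb.ne' using 1
    ring
  refine (((hnum.div hden (sqrt_pos.mpr hb).ne').const_add (-1)).const_mul (1 / 2)).congr_deriv ?_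
  rw [sGFDeriv, sqrt_two_add_mul_pow_three_eq hz]
  have ha2 := sq_sqrt ha.le
  have hb2 := sq_sqrt hb.le
  have ha0 := (sqrt_pos.mpr ha).ne'
  have hb0 := (sqrt_pos.mpr hb).ne'
  have h30 : √3 ≠ 0 := by positivity
  generalize √(2 + z) = a at ha2 ha0 ⊢
  generalize √(2 - 5 * z / 3) = b at hb2 hb0 ⊢
  field_simp
  -- both sides are `4 / (3 a b³)` because `3 b² + 5 a² = 16`
  linear_combination 3 * hb2 + 5 * ha2

/-- If `s` is analytic near `0` with `s(0) = 0` and `z·s'(z) = 4·d(z)` near `0`, then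
`s(z) = (1/2)(-1 + sqrt(2+z)/sqrt(2-5z/3))` near `0`. -/
theorem vertex_degree_gf (s : ℝ → ℝ) (hs : AnalyticAt ℝ s 0) (h0 : s 0 = 0)
    (hode : ∀ᶠ z in nhds (0 : ℝ), z * deriv s z = 4 * dGF z) :
    ∀ᶠ z in nhds (0 : ℝ),
      s z = (1 / 2) * (-1 + Real.sqrt (2 + z) / Real.sqrt (2 - 5 * z / 3)) := by
  have hdomain : Set.Ioo (-2 : ℝ) (6 / 5) ∈ 𝓝 0 := Ioo_mem_nhds (by norm_num) (by norm_num)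
  have hderiv : deriv s =ᶠ[𝓝 0] sGFDeriv := by
    refine eventuallyEq_of_mul_eq hs.deriv.continuousAt
      (continuousAt_sGFDeriv (mem_of_mem_nhds hdomain)) ?_
    filter_upwards [hode] with z hz
    rw [hz, mul_sGFDeriv]
  have hs' : ∀ᶠ z in 𝓝 0, HasDerivAt s (sGFDeriv z) z := by
    filter_upwards [hs.eventually_analyticAt, hderiv] with z hz hz'
    exact hz' ▸ hz.differentiableAt.hasDerivAt
  have hsGF' : ∀ᶠ z in 𝓝 0, HasDerivAt sGF (sGFDeriv z) z := by
    filter_upwards [hdomain] with z hz using hasDerivAt_sGF hz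
  exact eventuallyEq_of_hasDerivAt_of_eq hs' hsGF' (by simp [h0])
end

section
/- With U = V = V(z), where z = U(1-U)^2, and Z = sqrt(1 - 27z/4), the function B(z,1,1) satisfies B(z,1,1) = 1/27 - (4/27)Z^2 + (8√3/81)Z^3 + O(Z^4). -/
open Real Filter Asymptotics

set_option maxHeartbeats 1600000 in
/-- The generating function `B(z,1,1)` of 2-connected rooted planar maps, given by the
explicit formula for `B(z,x,u)` at `x = u = 1` on the diagonal `U = V = V(z)` of the
parametrization `z = U(1-V)²`, `z = V(1-U)²`, has the singular expansion
`B(z,1,1) = 1/27 - (4/27)Z² + (8√3/81)Z³ + O(Z⁴)` as `z → 4/27⁻`, where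
`Z = sqrt(1 - 27z/4)`. -/
theorem B_singular_expansion (V : ℝ → ℝ)
    (hV : ∀ z ∈ Set.Ico (0 : ℝ) (4 / 27), V z * (1 - V z) ^ 2 = z)
    (h0 : V 0 = 0) (hcont : ContinuousOn V (Set.Ico (0 : ℝ) (4 / 27))) :
    (fun z : ℝ =>
        (-(1 / 2) * (1 - (1 + V z - V z + V z * V z - 2 * (V z) ^ 2 * V z)
            + V z * (1 - V z) ^ 2)
          + (1 / 2) * (1 - (1 - V z)) *
            Real.sqrt (1 - 2 * V z * (1 + V z - 2 * V z * V z) + (V z) ^ 2 * (1 - V z) ^ 2))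
        - (1 / 27 - (4 / 27) * Real.sqrt (1 - 27 * z / 4) ^ 2
            + (8 * Real.sqrt 3 / 81) * Real.sqrt (1 - 27 * z / 4) ^ 3))
      =O[nhdsWithin (4 / 27 : ℝ) (Set.Iio (4 / 27))]
      (fun z : ℝ => Real.sqrt (1 - 27 * z / 4) ^ 4) := by
  -- Step 1: on [0, 4/27), V stays in [0, 1/3)
  have hVrange : ∀ z ∈ Set.Ico (0:ℝ) (4/27), 0 ≤ V z ∧ V z < 1/3 := by
    intro z hz
    have hveq := hV z hz
    constructor
    · by_contra h
      push_neg at h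
      nlinarith [hveq, hz.1, mul_pos (neg_pos.2 h)
        (pow_pos (by linarith : (0:ℝ) < 1 - V z) 2)]
    · by_contra h
      push_neg at h
      have hsub : Set.Icc (0:ℝ) z ⊆ Set.Ico (0:ℝ) (4/27) := fun x hx =>
        ⟨hx.1, lt_of_le_of_lt hx.2 hz.2⟩
      have hiv := intermediate_value_Icc hz.1 (hcont.mono hsub)
      have hmem : (1/3 : ℝ) ∈ Set.Icc (V 0) (V z) := by
        rw [h0]; exact ⟨by norm_num, h⟩
      obtain ⟨c, hc, hVc⟩ := hiv hmem
      have hce := hV c (hsub hc)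
      rw [hVc] at hce
      have : c = 4/27 := by linarith [hce]
      linarith [hc.2, hz.2]
  apply IsBigO.of_bound (16/81)
  filter_upwards [Ioo_mem_nhdsLT_of_mem
    (by norm_num : (4/27:ℝ) ∈ Set.Ioc (0:ℝ) (4/27))] with z hz
  have hzIco : z ∈ Set.Ico (0:ℝ) (4/27) := ⟨hz.1.le, hz.2⟩
  obtain ⟨hv0, hv3⟩ := hVrange z hzIco
  have hveq := hV z hzIco
  simp only [Real.norm_eq_abs]
  obtain ⟨v, hvdef⟩ : ∃ v, V z = v := ⟨_, rfl⟩
  rw [hvdef] at hv0 hv3 hveq ⊢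
  obtain ⟨s, hsdef⟩ : ∃ s, Real.sqrt 3 = s := ⟨_, rfl⟩
  have hs2 : s^2 = 3 := by rw [← hsdef]; exact Real.sq_sqrt (by norm_num)
  have hs0 : 0 < s := by rw [← hsdef]; exact Real.sqrt_pos.2 (by norm_num)
  rw [hsdef]
  obtain ⟨Z, hZdef⟩ : ∃ Z, Real.sqrt (1 - 27 * z / 4) = Z := ⟨_, rfl⟩
  have hz4 : 0 < 1 - 27*z/4 := by linarith [hz.2]
  have hZ0 : 0 < Z := by rw [← hZdef]; exact Real.sqrt_pos.2 hz4
  have hZ2 : Z^2 = 1 - 27*z/4 := by rw [← hZdef]; exact Real.sq_sqrt hz4.le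
  rw [hZdef]
  -- simplify the inner square root
  have hpos : 0 ≤ 1 - v - v^2 := by nlinarith
  rw [show (1 - 2 * v * (1 + v - 2 * v * v) + v ^ 2 * (1 - v) ^ 2 : ℝ)
      = (1 - v - v^2)^2 from by ring, Real.sqrt_sq hpos]
  set t : ℝ := 1/3 - v with htdef
  have ht0 : 0 < t := by rw [htdef]; linarith
  have key : t^2 + t^3 = (4/27)*Z^2 := by
    rw [hZ2, htdef, ← hveq]; ring
  clear_value t
  set A : ℝ := (2*s/9)*Z with hAdef
  have hA0 : 0 < A := by positivity
  have hA2 : A^2 = (4/27)*Z^2 := by rw [hAdef]; linear_combination (4*Z^2/81)*hs2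
  have hA3 : A^3 = (8*s/243)*Z^3 := by rw [hAdef]; linear_combination (8*s*Z^3/729)*hs2
  clear_value A
  have htA : t ≤ A := by
    have h1 : t^2 ≤ A^2 := by linarith [key, hA2, pow_nonneg ht0.le 3]
    nlinarith [h1, ht0, hA0]
  have ht3 : t^3 ≤ A^3 := by
    have := pow_le_pow_left₀ ht0.le htA 3
    simpa using this
  have hu : A - t ≤ (4/27)*Z^2 := by
    have hfac : (A - t) * (A + t) = t^3 := by
      linear_combination hA2 - key
    have h1 : (A - t) * (A + t) ≤ ((4/27)*Z^2) * (A + t) := by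
      calc (A - t) * (A + t) = t^3 := hfac
        _ ≤ A^3 := ht3
        _ = A^2 * A := by ring
        _ ≤ ((4/27)*Z^2) * (A + t) := by
            rw [hA2]; nlinarith [mul_nonneg (sq_nonneg Z) ht0.le]
    exact le_of_mul_le_mul_right h1 (by positivity)
  have hquad : t^2 + t*A + A^2 ≤ (4/9)*Z^2 := by
    have h1 := mul_self_le_mul_self ht0.le htA
    have h2 := mul_le_mul_of_nonneg_right htA hA0.le
    linarith [h1, h2, hA2]
  have hquad0 : 0 ≤ t^2 + t*A + A^2 := by
    linarith [mul_nonneg ht0.le hA0.le, sq_nonneg t, sq_nonneg A]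
  have hprod : (A - t) * (t^2 + t*A + A^2) ≤ ((4/27)*Z^2) * ((4/9)*Z^2) :=
    mul_le_mul hu hquad hquad0 (by positivity)
  have hdiff : A^3 - t^3 ≤ (16/243)*Z^4 := by linarith [hprod]
  -- the expression equals 3 t³ - (8 s/81) Z³
  have hexpr : (-(1 / 2) * (1 - (1 + v - v + v * v - 2 * v ^ 2 * v) + v * (1 - v) ^ 2)
        + 1 / 2 * (1 - (1 - v)) * (1 - v - v^2))
      - (1 / 27 - 4 / 27 * Z ^ 2 + 8 * s / 81 * Z ^ 3)
      = 3*t^3 - (8*s/81)*Z^3 := by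
    rw [htdef]; linear_combination (4/27)*hZ2 + hveq
  rw [abs_of_nonneg (by positivity : (0:ℝ) ≤ Z^4), abs_le]
  constructor
  · linarith [hexpr, ht3, hA3, pow_nonneg hZ0.le 4, hdiff]
  · linarith [hexpr, ht3, hA3, pow_nonneg hZ0.le 4]
end

section
/- Let A(z) be the unique power series with A(0) = 0 satisfying A(z) = z + A(z)^3/(1 - A(z)^2). Then the radius of convergence of A equals -(1/8)·sqrt(5-√17)·(√17 - 7) ≈ 0.33674. -/
open PowerSeries FormalMultilinearSeries

/-!
Clearing denominators, `A` satisfies the cubic `2A³ - zA² - A + z = 0`. At `z₀` this cubic in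
`A` acquires the double root `y₀ = √(5 - √17) / 2`, which is where `z = y - y³/(1 - y²)` has
vanishing derivative.

Lower bound: writing `A = zC` and `B = 1/(1 - A²)`, the pair `(C, B)` solves the positive system
`C = 1 + z²C³B`, `B = 1 + z²C²B`. For `0 < x < z₀` the cubic has a root `y ∈ (0, 1)`, and
`(y/x, 1/(1 - y²))` is a fixed point of the system at `z = x`; by induction on the truncation
order it bounds all partial sums of `C` and `B` at `x`.

Upper bound: `A` has nonnegative coefficients, by the same system. If the radius exceeded `z₀`,
the value `A(t)` at some `t ∈ (z₀, 1]` would be a nonnegative root of the cubic at `t`. But on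
`[0, ∞)` that cubic is a positive combination of the cubic at `z₀`, which is nonnegative there,
and the cubic at `1`, which is positive there.
-/

namespace BipartiteDissection

open scoped Polynomial

section NonnegCoeffs

variable {R : Type*} [CommSemiring R] [PartialOrder R] [IsOrderedRing R]

def nonnegCoeffs : Subsemiring R[X] where
  carrier := {p | ∀ n, 0 ≤ p.coeff n}
  mul_mem' {p q} hp hq n := by
    rw [Polynomial.coeff_mul]
    exact Finset.sum_nonneg fun i _ => mul_nonneg (hp _) (hq _)
  one_mem' n := by
    rw [Polynomial.coeff_one]
    split_ifs <;> simp
  add_mem' {p q} hp hq n := by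
    rw [Polynomial.coeff_add]
    exact add_nonneg (hp n) (hq n)
  zero_mem' n := by simp

lemma X_mem_nonnegCoeffs : (Polynomial.X : R[X]) ∈ nonnegCoeffs := fun n => by
  rw [Polynomial.coeff_X]
  split_ifs <;> simp

lemma trunc_mem_nonnegCoeffs {p : R[X]} (hp : p ∈ nonnegCoeffs) (n : ℕ) :
    trunc n (p : R⟦X⟧) ∈ nonnegCoeffs := fun m => by
  rw [coeff_trunc, Polynomial.coeff_coe]
  split_ifs
  exacts [hp m, le_rfl]

lemma eval_le_eval_of_coeff_le {p q : R[X]} (h : ∀ n, p.coeff n ≤ q.coeff n) {x : R}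
    (hx : 0 ≤ x) : p.eval x ≤ q.eval x := by
  set N := max p.natDegree q.natDegree + 1
  rw [Polynomial.eval_eq_sum_range' (n := N) (by omega),
    Polynomial.eval_eq_sum_range' (n := N) (by omega)]
  exact Finset.sum_le_sum fun n _ => mul_le_mul_of_nonneg_right (h n) (pow_nonneg hx n)

variable {p : R[X]} (hp : p ∈ nonnegCoeffs) {x : R} (hx : 0 ≤ x)
include hp hx

lemma eval_nonneg_of_mem_nonnegCoeffs : 0 ≤ p.eval x := by
  simpa using eval_le_eval_of_coeff_le (p := 0) (fun n => by simpa using hp n) hx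

lemma coeff_mul_pow_le_eval (n : ℕ) : p.coeff n * x ^ n ≤ p.eval x := by
  refine (Polynomial.eval_monomial (x := x)).symm.trans_le
    (eval_le_eval_of_coeff_le (fun m => ?_) hx)
  rw [Polynomial.coeff_monomial]
  split_ifs with h
  exacts [h ▸ le_rfl, hp m]

lemma eval_trunc_le (n : ℕ) : (trunc n (p : R⟦X⟧)).eval x ≤ p.eval x := by
  refine eval_le_eval_of_coeff_le (fun m => ?_) hx
  rw [coeff_trunc, Polynomial.coeff_coe]
  split_ifs
  exacts [le_rfl, hp m]

end NonnegCoeffs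

section PositiveSystem

variable {R : Type*} [CommSemiring R]

lemma trunc_succ_one_add_X_sq_mul_congr {F G : R⟦X⟧} {N : ℕ} (h : trunc N F = trunc N G) :
    trunc (N + 1) (1 + X ^ 2 * F) = trunc (N + 1) (1 + X ^ 2 * G) := by
  ext m
  simp only [map_add, Polynomial.coeff_add, coeff_trunc, coeff_X_pow_mul']
  split_ifs with hm h2
  · congr 1
    simpa [coeff_trunc, show m - 2 < N by omega] using congrArg (Polynomial.coeff · (m - 2)) h
  all_goals rfl

lemma trunc_succ_eq_of_eq_one_add_X_sq_mul {F C B : R⟦X⟧} {k : ℕ}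
    (hF : F = 1 + X ^ 2 * (C ^ k * B)) (N : ℕ) :
    trunc (N + 1) F =
      trunc (N + 1) ((1 + Polynomial.X ^ 2 * (trunc N C ^ k * trunc N B) : R[X]) : R⟦X⟧) := by
  rw [hF]
  push_cast
  refine trunc_succ_one_add_X_sq_mul_congr ?_
  rw [trunc_mul_trunc, ← trunc_trunc_mul ((trunc N C : R⟦X⟧) ^ k) B, trunc_trunc_pow,
    trunc_trunc_mul]

variable [PartialOrder R] [IsOrderedRing R]

lemma one_add_X_sq_mul_mem_nonnegCoeffs {c b : R[X]} (hc : c ∈ nonnegCoeffs)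
    (hb : b ∈ nonnegCoeffs) (k : ℕ) : 1 + Polynomial.X ^ 2 * (c ^ k * b) ∈ nonnegCoeffs :=
  add_mem (one_mem _) (mul_mem (pow_mem X_mem_nonnegCoeffs 2) (mul_mem (pow_mem hc k) hb))

lemma eval_trunc_succ_le {F C B : R⟦X⟧} {k N : ℕ} (hF : F = 1 + X ^ 2 * (C ^ k * B))
    (hCN : trunc N C ∈ nonnegCoeffs) (hBN : trunc N B ∈ nonnegCoeffs) {x c w : R} (hx : 0 ≤ x)
    (hc : (trunc N C).eval x ≤ c) (hw : (trunc N B).eval x ≤ w) :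
    (trunc (N + 1) F).eval x ≤ 1 + x ^ 2 * (c ^ k * w) := by
  have hCx := eval_nonneg_of_mem_nonnegCoeffs hCN hx
  have hBx := eval_nonneg_of_mem_nonnegCoeffs hBN hx
  have hc₀ := hCx.trans hc
  rw [trunc_succ_eq_of_eq_one_add_X_sq_mul hF]
  refine (eval_trunc_le (one_add_X_sq_mul_mem_nonnegCoeffs hCN hBN k) hx _).trans ?_
  simp only [Polynomial.eval_add, Polynomial.eval_one, Polynomial.eval_mul, Polynomial.eval_pow,
    Polynomial.eval_X]
  gcongr

variable {C B : R⟦X⟧} (hC : C = 1 + X ^ 2 * (C ^ 3 * B)) (hB : B = 1 + X ^ 2 * (C ^ 2 * B))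
include hC hB

lemma trunc_mem_nonnegCoeffs_of_system (N : ℕ) :
    trunc N C ∈ nonnegCoeffs ∧ trunc N B ∈ nonnegCoeffs := by
  induction N with
  | zero => simp [zero_mem]
  | succ N ih =>
    rw [trunc_succ_eq_of_eq_one_add_X_sq_mul hC, trunc_succ_eq_of_eq_one_add_X_sq_mul hB]
    exact ⟨trunc_mem_nonnegCoeffs (one_add_X_sq_mul_mem_nonnegCoeffs ih.1 ih.2 3) _,
      trunc_mem_nonnegCoeffs (one_add_X_sq_mul_mem_nonnegCoeffs ih.1 ih.2 2) _⟩

lemma eval_trunc_le_of_system {x c w : R} (hx : 0 ≤ x) (hc₀ : 0 ≤ c) (hw₀ : 0 ≤ w)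
    (hc : 1 + x ^ 2 * (c ^ 3 * w) ≤ c) (hw : 1 + x ^ 2 * (c ^ 2 * w) ≤ w) (N : ℕ) :
    (trunc N C).eval x ≤ c ∧ (trunc N B).eval x ≤ w := by
  induction N with
  | zero => simpa using ⟨hc₀, hw₀⟩
  | succ N ih =>
    obtain ⟨hCN, hBN⟩ := trunc_mem_nonnegCoeffs_of_system hC hB N
    exact ⟨(eval_trunc_succ_le hC hCN hBN hx ih.1 ih.2).trans hc,
      (eval_trunc_succ_le hB hCN hBN hx ih.1 ih.2).trans hw⟩

end PositiveSystem

section Evaluation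

variable {R : Type*} [NormedCommRing R]

lemma sum_antidiagonal_coeff_mul_pow (F G : R⟦X⟧) (u : R) (n : ℕ) :
    ∑ kl ∈ Finset.HasAntidiagonal.antidiagonal n,
        coeff kl.1 F * u ^ kl.1 * (coeff kl.2 G * u ^ kl.2) = coeff n (F * G) * u ^ n := by
  rw [coeff_mul, Finset.sum_mul]
  refine Finset.sum_congr rfl fun kl hkl => ?_
  rw [← Finset.HasAntidiagonal.mem_antidiagonal.mp hkl, pow_add]
  ring

def convergentAt (u : R) : Subring R⟦X⟧ where
  carrier := {F | Summable fun n => ‖coeff n F * u ^ n‖}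
  mul_mem' {F G} hF hG := by
    change Summable _
    simpa only [sum_antidiagonal_coeff_mul_pow] using
      summable_norm_sum_mul_antidiagonal_of_summable_norm hF hG
  one_mem' := summable_of_ne_finset_zero (s := {0}) fun n hn => by
    simp [coeff_one, Finset.mem_singleton.not.mp hn]
  add_mem' {F G} hF hG := (hF.add hG).of_nonneg_of_le (fun _ => norm_nonneg _) fun n => by
    rw [map_add, add_mul]
    exact norm_add_le _ _
  zero_mem' := by simp [summable_zero]
  neg_mem' {F} hF := by
    have hF : Summable fun n => ‖coeff n F * u ^ n‖ := hF
    change Summable _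
    simpa only [map_neg, neg_mul, norm_neg] using hF

lemma X_mem_convergentAt (u : R) : X ∈ convergentAt u :=
  summable_of_ne_finset_zero (s := {1}) fun n hn => by
    simp [coeff_X, Finset.mem_singleton.not.mp hn]

variable [CompleteSpace R]

noncomputable def evalAt (u : R) : convergentAt u →+* R where
  toFun F := ∑' n, coeff n (F : R⟦X⟧) * u ^ n
  map_one' := by
    rw [tsum_eq_single 0 fun n hn => by simp [coeff_one, hn]]
    simp
  map_mul' F G := by
    rw [tsum_mul_tsum_eq_tsum_sum_antidiagonal_of_summable_norm F.2 G.2]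
    simp only [Subring.coe_mul, sum_antidiagonal_coeff_mul_pow]
  map_zero' := by simp
  map_add' F G := by
    simp only [Subring.coe_add, map_add, add_mul]
    exact F.2.of_norm.tsum_add G.2.of_norm

lemma evalAt_X (u : R) : evalAt u ⟨X, X_mem_convergentAt u⟩ = u := by
  change ∑' n, coeff n (X : R⟦X⟧) * u ^ n = u
  rw [tsum_eq_single 1 fun n hn => by simp [coeff_X, hn]]
  simp

lemma mem_convergentAt_of_lt_radius {𝕜 : Type*} [NontriviallyNormedField 𝕜] [CompleteSpace 𝕜]
    {F : 𝕜⟦X⟧} {u : 𝕜} (hu : ‖u‖ₑ < (ofScalars 𝕜 fun n => coeff n F).radius) :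
    F ∈ convergentAt u := by
  change Summable _
  simpa [norm_mul, norm_pow, ofScalars_norm] using
    (ofScalars 𝕜 fun n => coeff n F).summable_norm_mul_pow hu

end Evaluation

noncomputable def y₀ : ℝ := √(5 - √17) / 2

noncomputable def z₀ : ℝ := y₀ * (7 - √17) / 4

lemma sqrt17_sq : √17 ^ 2 = 17 := Real.sq_sqrt (by norm_num)

lemma sqrt17_lt_five : √17 < 5 := by
  rw [Real.sqrt_lt' (by norm_num)]
  norm_num

lemma y₀_sq : y₀ ^ 2 = (5 - √17) / 4 := by
  rw [y₀, div_pow, Real.sq_sqrt (by linarith [sqrt17_lt_five])]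
  norm_num

lemma y₀_pos : 0 < y₀ := by
  unfold y₀
  have := Real.sqrt_pos.mpr (sub_pos.mpr sqrt17_lt_five)
  positivity

lemma y₀_lt_one : y₀ < 1 := by
  nlinarith [y₀_sq, y₀_pos, Real.sqrt_nonneg 17, sqrt17_sq]

lemma z₀_pos : 0 < z₀ := by
  unfold z₀
  have := y₀_pos
  have := sqrt17_lt_five
  have : 0 < 7 - √17 := by linarith
  positivity

lemma z₀_lt_one : z₀ < 1 := by
  have : 3 < √17 := by
    rw [Real.lt_sqrt (by norm_num)]
    norm_num
  unfold z₀
  nlinarith [y₀_pos, y₀_lt_one]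

lemma y₀_sq_mul_cubic_z₀ (y : ℝ) :
    y₀ ^ 2 * (2 * y ^ 3 - z₀ * y ^ 2 - y + z₀) = (2 * y₀ ^ 2 * y + z₀) * (y - y₀) ^ 2 := by
  unfold z₀
  linear_combination
    (y ^ 2 * y₀ * (9 + √17) / 4 - 2 * y * y₀ ^ 2) * y₀_sq - y ^ 2 * y₀ / 16 * sqrt17_sq

lemma cubic_z₀_nonneg {y : ℝ} (hy : 0 ≤ y) : 0 ≤ 2 * y ^ 3 - z₀ * y ^ 2 - y + z₀ := by
  have h := y₀_sq_mul_cubic_z₀ y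
  have : 0 ≤ (2 * y₀ ^ 2 * y + z₀) * (y - y₀) ^ 2 := by
    have := z₀_pos
    positivity
  exact nonneg_of_mul_nonneg_right (h ▸ this) (by positivity [y₀_pos])

lemma cubic_z₀_y₀ : 2 * y₀ ^ 3 - z₀ * y₀ ^ 2 - y₀ + z₀ = 0 := by
  have h := y₀_sq_mul_cubic_z₀ y₀
  rw [sub_self, zero_pow two_ne_zero, mul_zero] at h
  exact (mul_eq_zero.mp h).resolve_left (pow_ne_zero 2 y₀_pos.ne')

lemma cubic_pos_of_z₀_lt {t y : ℝ} (ht : z₀ < t) (ht₁ : t ≤ 1) (hy : 0 ≤ y) :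
    0 < 2 * y ^ 3 - t * y ^ 2 - y + t := by
  have h₁ : 0 < 2 * y ^ 3 - y ^ 2 - y + 1 := by
    nlinarith [sq_nonneg (y - 1 / 2), sq_nonneg (y - 1)]
  have hz := z₀_lt_one
  have h : (1 - z₀) * (2 * y ^ 3 - t * y ^ 2 - y + t) =
      (1 - t) * (2 * y ^ 3 - z₀ * y ^ 2 - y + z₀) + (t - z₀) * (2 * y ^ 3 - y ^ 2 - y + 1) := by
    ring
  have : 0 < (1 - z₀) * (2 * y ^ 3 - t * y ^ 2 - y + t) := by
    rw [h]
    have := cubic_z₀_nonneg hy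
    have : 0 ≤ 1 - t := by linarith
    have : 0 < t - z₀ := by linarith
    positivity
  exact pos_of_mul_pos_right this (by linarith)

lemma exists_cubic_root_of_lt_z₀ {x : ℝ} (hx : 0 < x) (hxz : x < z₀) :
    ∃ y, 0 < y ∧ y < 1 ∧ 2 * y ^ 3 - x * y ^ 2 - y + x = 0 := by
  have hneg : 2 * y₀ ^ 3 - x * y₀ ^ 2 - y₀ + x < 0 := by
    rw [show 2 * y₀ ^ 3 - x * y₀ ^ 2 - y₀ + x = (z₀ - x) * (y₀ ^ 2 - 1) by
      linear_combination cubic_z₀_y₀]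
    exact mul_neg_of_pos_of_neg (by linarith) (by nlinarith [y₀_pos, y₀_lt_one])
  obtain ⟨y, hy, hroot⟩ := intermediate_value_Ioo' y₀_pos.le
    (by fun_prop : Continuous fun y => 2 * y ^ 3 - x * y ^ 2 - y + x).continuousOn
    ⟨hneg, by simpa using hx⟩
  exact ⟨y, hy.1, hy.2.trans y₀_lt_one, hroot⟩

section Series

variable {A : ℝ⟦X⟧}

lemma mul_inv_one_sub_sq (h0 : constantCoeff A = 0) : (1 - A ^ 2) * (1 - A ^ 2)⁻¹ = 1 :=
  PowerSeries.mul_inv_cancel _ (by simp [h0])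

lemma exists_positive_system (h0 : constantCoeff A = 0) (hA : A = X + A ^ 3 * (1 - A ^ 2)⁻¹) :
    ∃ C B : ℝ⟦X⟧, A = X * C ∧ C = 1 + X ^ 2 * (C ^ 3 * B) ∧ B = 1 + X ^ 2 * (C ^ 2 * B) := by
  have hinv := mul_inv_one_sub_sq h0
  obtain ⟨C, rfl⟩ := X_dvd_iff.mpr h0
  refine ⟨C, (1 - (X * C) ^ 2)⁻¹, rfl, mul_left_cancel₀ X_ne_zero ?_, ?_⟩
  · linear_combination hA
  · linear_combination hinv

lemma add_X_mul_sq_eq (h0 : constantCoeff A = 0) (hA : A = X + A ^ 3 * (1 - A ^ 2)⁻¹) :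
    A + X * A ^ 2 = X + 2 * A ^ 3 := by
  linear_combination (1 - A ^ 2) * hA + A ^ 3 * mul_inv_one_sub_sq h0

lemma coeff_nonneg (h0 : constantCoeff A = 0) (hA : A = X + A ^ 3 * (1 - A ^ 2)⁻¹) (n : ℕ) :
    0 ≤ coeff n A := by
  obtain ⟨C, B, rfl, hC, hB⟩ := exists_positive_system h0 hA
  cases n with
  | zero => simp
  | succ n =>
    rw [coeff_succ_X_mul]
    simpa [coeff_trunc] using (trunc_mem_nonnegCoeffs_of_system hC hB (n + 1)).1 n

lemma ofReal_le_radius (h0 : constantCoeff A = 0) (hA : A = X + A ^ 3 * (1 - A ^ 2)⁻¹) {x : ℝ}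
    (hx : 0 < x) (hxz : x < z₀) :
    ENNReal.ofReal x ≤ (ofScalars ℝ fun n => coeff n A).radius := by
  have hA₀ := coeff_nonneg h0 hA
  obtain ⟨y, hy, hy₁, hroot⟩ := exists_cubic_root_of_lt_z₀ hx hxz
  obtain ⟨C, B, rfl, hC, hB⟩ := exists_positive_system h0 hA
  have hy₂ : 0 < 1 - y ^ 2 := by nlinarith
  have hc : 1 + x ^ 2 * ((y / x) ^ 3 * (1 - y ^ 2)⁻¹) = y / x := by
    field_simp
    linear_combination hroot
  have hw : 1 + x ^ 2 * ((y / x) ^ 2 * (1 - y ^ 2)⁻¹) = (1 - y ^ 2)⁻¹ := by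
    field_simp
    ring
  have hbound := eval_trunc_le_of_system hC hB hx.le (by positivity) (by positivity) hc.le hw.le
  refine le_radius_of_bound _ y fun n => ?_
  rw [ofScalars_norm, Real.norm_of_nonneg (hA₀ n), Real.coe_toNNReal _ hx.le]
  cases n with
  | zero => simpa using hy.le
  | succ n =>
    have hCn := (trunc_mem_nonnegCoeffs_of_system hC hB (n + 1)).1
    have := (coeff_mul_pow_le_eval hCn hx.le n).trans (hbound (n + 1)).1
    rw [coeff_trunc, if_pos n.lt_succ_self] at this
    calc PowerSeries.coeff (n + 1) (X * C) * x ^ (n + 1) = x * (coeff n C * x ^ n) := by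
          rw [coeff_succ_X_mul]
          ring
      _ ≤ x * (y / x) := by gcongr
      _ = y := by field_simp

lemma radius_le (h0 : constantCoeff A = 0) (hA : A = X + A ^ 3 * (1 - A ^ 2)⁻¹) :
    (ofScalars ℝ fun n => coeff n A).radius ≤ ENNReal.ofReal z₀ := by
  by_contra! h
  obtain ⟨t, ht, hzt, htr⟩ :=
    ENNReal.lt_iff_exists_real_btwn.mp (lt_min h (ENNReal.ofReal_lt_one.mpr z₀_lt_one))
  have hmem : A ∈ convergentAt t := mem_convergentAt_of_lt_radius
    (by rw [Real.enorm_of_nonneg ht]; exact htr.trans_le (min_le_left _ _))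
  have hX := X_mem_convergentAt t
  have hcubic := congrArg (evalAt t)
    (show (⟨A, hmem⟩ + ⟨X, hX⟩ * ⟨A, hmem⟩ ^ 2 : convergentAt t) = ⟨X, hX⟩ + 2 * ⟨A, hmem⟩ ^ 3 from
      Subtype.ext (by push_cast; exact add_X_mul_sq_eq h0 hA))
  simp only [map_add, map_mul, map_pow, map_ofNat, evalAt_X] at hcubic
  have hf : 0 ≤ evalAt t ⟨A, hmem⟩ :=
    tsum_nonneg fun n => mul_nonneg (coeff_nonneg h0 hA n) (pow_nonneg ht n)
  have := cubic_pos_of_z₀_lt ((ENNReal.ofReal_lt_ofReal_iff_of_nonneg z₀_pos.le).mp hzt)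
    (ENNReal.ofReal_lt_one.mp (htr.trans_le (min_le_right _ _))).le hf
  linarith

lemma le_radius (h0 : constantCoeff A = 0) (hA : A = X + A ^ 3 * (1 - A ^ 2)⁻¹) :
    ENNReal.ofReal z₀ ≤ (ofScalars ℝ fun n => coeff n A).radius := by
  refine le_of_forall_lt_imp_le_of_dense fun r hr => ?_
  obtain ⟨x, -, hrx, hxz⟩ := ENNReal.lt_iff_exists_real_btwn.mp hr
  exact hrx.le.trans (ofReal_le_radius h0 hA (ENNReal.ofReal_pos.mp (hrx.trans_le' bot_le))
    ((ENNReal.ofReal_lt_ofReal_iff z₀_pos).mp hxz))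

end Series

end BipartiteDissection

/-- If `A` is the power series with `A(0) = 0` satisfying `A = z + A³/(1-A²)`
(the generating function of bipartite polygon dissections plus a single edge), then its
radius of convergence equals `-(1/8)·sqrt(5-√17)·(√17-7)`. -/
theorem bipartite_dissection_radius (A : PowerSeries ℝ)
    (h0 : PowerSeries.constantCoeff A = 0)
    (hA : A = PowerSeries.X + A ^ 3 * (1 - A ^ 2)⁻¹) :
    (FormalMultilinearSeries.ofScalars ℝ
        (fun n => PowerSeries.coeff n A) : FormalMultilinearSeries ℝ ℝ ℝ).radius =
      ENNReal.ofReal (-(1 / 8) * Real.sqrt (5 - Real.sqrt 17) * (Real.sqrt 17 - 7)) := by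
  have hz₀ : -(1 / 8) * √(5 - √17) * (√17 - 7) = BipartiteDissection.z₀ := by
    unfold BipartiteDissection.z₀ BipartiteDissection.y₀
    ring
  rw [hz₀]
  exact le_antisymm (BipartiteDissection.radius_le h0 hA) (BipartiteDissection.le_radius h0 hA)
end
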